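/- Let z = ⌈(C(t,a)/C(t-b,a))·ln C(t,a)⌉ where a + b ≤ t and a,b ≥ 1. Then there exists a family R of z subsets of [t], each of size b, such that for every subset S of [t] of size a, some member of R is disjoint from S. -/

import Mathlib

/-!
A derandomised union bound. Double counting pairs (B, S) of a `b`-set and an `a`-set that are
disjoint shows that, for any family of `a`-sets, some `b`-set is disjoint from at least the fraction
`r = C(t-a,b)/C(t,b) = C(t-b,a)/C(t,a)` of its members. Choosing such `b`-sets greedily, each step
keeps at most a `1 - r` fraction of the still uncovered `a`-sets, so after `z` steps at most
`C(t,a) (1-r)^z < C(t,a) e^(-rz) ≤ 1` of them remain, i.e. none.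
-/

open Finset

theorem Nat.choose_mul_choose_sub_comm (n a b : ℕ) :
    n.choose b * (n - b).choose a = n.choose a * (n - a).choose b := by
  have hb := Nat.choose_mul (n := n) (k := a + b) (s := b) (Nat.le_add_left b a)
  have ha := Nat.choose_mul (n := n) (k := a + b) (s := a) (Nat.le_add_right a b)
  rw [Nat.add_sub_cancel] at hb
  rw [Nat.add_sub_cancel_left, Nat.choose_symm_add] at ha
  exact hb.symm.trans ha

theorem exists_card_uncovered_le_mul_one_sub_pow {ι β : Type*} (p : ι → Prop)
    (covers : ι → β → Prop) [∀ i x, Decidable (covers i x)] {r : ℝ} (hr : r ≤ 1)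
    (𝒰 : Finset β) (hstep : ∀ 𝒮 ⊆ 𝒰, ∃ i, p i ∧ r * #𝒮 ≤ #{x ∈ 𝒮 | covers i x}) (z : ℕ) :
    ∃ R : Fin z → ι, (∀ k, p (R k)) ∧
      (#{x ∈ 𝒰 | ∀ k, ¬ covers (R k) x} : ℝ) ≤ #𝒰 * (1 - r) ^ z := by
  suffices ∀ 𝒮 ⊆ 𝒰, ∃ R : Fin z → ι, (∀ k, p (R k)) ∧
      (#{x ∈ 𝒮 | ∀ k, ¬ covers (R k) x} : ℝ) ≤ #𝒮 * (1 - r) ^ z from this 𝒰 subset_rfl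
  induction z with
  | zero =>
    intro 𝒮 _
    exact ⟨finZeroElim, finZeroElim, by simp⟩
  | succ z ih =>
    intro 𝒮 h𝒮
    obtain ⟨i, hi, hcovered⟩ := hstep 𝒮 h𝒮
    set 𝒮' := {x ∈ 𝒮 | ¬ covers i x}
    obtain ⟨R, hR, huncovered⟩ := ih 𝒮' ((filter_subset _ _).trans h𝒮)
    have h𝒮' : (#𝒮' : ℝ) ≤ (1 - r) * #𝒮 := by
      have hsplit := card_filter_add_card_filter_not (s := 𝒮) (covers i)
      rw [← Nat.cast_inj (R := ℝ), Nat.cast_add] at hsplit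
      linarith
    refine ⟨Fin.cons i R, Fin.forall_fin_succ.2 ⟨hi, hR⟩, ?_⟩
    have hcons : {x ∈ 𝒮 | ∀ k, ¬ covers ((Fin.cons i R : Fin (z + 1) → ι) k) x}
        = {x ∈ 𝒮' | ∀ k, ¬ covers (R k) x} := by
      ext x
      simp only [𝒮', mem_filter, Fin.forall_fin_succ, Fin.cons_zero, Fin.cons_succ, and_assoc]
    rw [hcons]
    calc (#{x ∈ 𝒮' | ∀ k, ¬ covers (R k) x} : ℝ) ≤ #𝒮' * (1 - r) ^ z := huncovered
      _ ≤ (1 - r) * #𝒮 * (1 - r) ^ z := by gcongr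
      _ = #𝒮 * (1 - r) ^ (z + 1) := by ring

section

variable {α : Type*} [Fintype α] [DecidableEq α]

theorem Finset.card_filter_powersetCard_univ_disjoint (b : ℕ) (S : Finset α) :
    #{B ∈ powersetCard b univ | Disjoint B S} = (Fintype.card α - #S).choose b := by
  have : {B ∈ powersetCard b (univ : Finset α) | Disjoint B S} = powersetCard b Sᶜ := by
    ext B
    rw [mem_filter, mem_powersetCard_univ, mem_powersetCard, subset_compl_iff_disjoint_right,
      and_comm]
  rw [this, card_powersetCard, card_compl]

theorem exists_card_eq_choose_mul_card_le_card_filter_disjoint {a b : ℕ}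
    (hb : b ≤ Fintype.card α) (𝒮 : Finset (Finset α)) (h𝒮 : ∀ S ∈ 𝒮, #S = a) :
    ∃ B : Finset α, #B = b ∧
      (Fintype.card α - a).choose b * #𝒮 ≤
        (Fintype.card α).choose b * #{S ∈ 𝒮 | Disjoint B S} := by
  set P := powersetCard b (univ : Finset α)
  have hP : P.Nonempty := powersetCard_nonempty.2 (by simpa using hb)
  have hdouble : ∑ B ∈ P, #{S ∈ 𝒮 | Disjoint B S} = ∑ S ∈ 𝒮, #{B ∈ P | Disjoint B S} :=
    sum_card_bipartiteAbove_eq_sum_card_bipartiteBelow _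
  have hsum : ∑ B ∈ P, (Fintype.card α).choose b * #{S ∈ 𝒮 | Disjoint B S}
      = ∑ _B ∈ P, (Fintype.card α - a).choose b * #𝒮 := by
    rw [← mul_sum, hdouble, sum_const_nat fun S hS => by
      rw [card_filter_powersetCard_univ_disjoint, h𝒮 S hS]]
    rw [sum_const, card_powersetCard, card_univ, smul_eq_mul]
    ring
  obtain ⟨B, hB, hle⟩ := exists_le_of_sum_le hP hsum.ge
  exact ⟨B, mem_powersetCard_univ.1 hB, hle⟩

theorem exists_card_eq_choose_div_mul_le_card_filter_disjoint {a b : ℕ}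
    (hab : a + b ≤ Fintype.card α) (𝒮 : Finset (Finset α)) (h𝒮 : ∀ S ∈ 𝒮, #S = a) :
    ∃ B : Finset α, #B = b ∧
      ((Fintype.card α - b).choose a / (Fintype.card α).choose a : ℝ) * #𝒮 ≤
        #{S ∈ 𝒮 | Disjoint B S} := by
  obtain ⟨B, hB, hle⟩ :=
    exists_card_eq_choose_mul_card_le_card_filter_disjoint (b := b) (by omega) 𝒮 h𝒮
  refine ⟨B, hB, ?_⟩
  have hpos (k : ℕ) (hk : k ≤ Fintype.card α) : (0 : ℝ) < (Fintype.card α).choose k := by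
    exact_mod_cast Nat.choose_pos hk
  have hcomm : ((Fintype.card α).choose b * (Fintype.card α - b).choose a : ℝ)
      = (Fintype.card α).choose a * (Fintype.card α - a).choose b := by
    exact_mod_cast Nat.choose_mul_choose_sub_comm _ a b
  have hle' : ((Fintype.card α - a).choose b * #𝒮 : ℝ) ≤
      (Fintype.card α).choose b * #{S ∈ 𝒮 | Disjoint B S} := by exact_mod_cast hle
  rw [div_mul_eq_mul_div, div_le_iff₀ (hpos a (by omega))]
  nlinarith [hpos b (by omega)]

end

theorem Real.mul_one_sub_pow_lt_one {N r : ℝ} {z : ℕ} (hN : 1 < N) (hr0 : 0 < r) (hr1 : r ≤ 1)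
    (hz : r⁻¹ * Real.log N ≤ z) : N * (1 - r) ^ z < 1 := by
  have hlog : Real.log N ≤ r * z := by rwa [inv_mul_le_iff₀ hr0] at hz
  have hz0 : z ≠ 0 := by
    rintro rfl
    linarith [Real.log_pos hN, show r * ((0 : ℕ) : ℝ) = 0 by simp]
  calc N * (1 - r) ^ z < N * Real.exp (-r) ^ z :=
        mul_lt_mul_of_pos_left
          (pow_lt_pow_left₀ (Real.one_sub_lt_exp_neg hr0.ne') (by linarith) hz0) (by linarith)
    _ = N * Real.exp (-(r * z)) := by rw [← Real.exp_nat_mul]; ring_nf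
    _ ≤ N * Real.exp (-Real.log N) := by gcongr
    _ = 1 := by rw [Real.exp_neg, Real.exp_log (by linarith), mul_inv_cancel₀ (by linarith)]

/-- For `z = ⌈(C(t,a)/C(t-b,a))·ln C(t,a)⌉`, there exists an (ordered)
family of `z` many `b`-subsets of `[t]` such that every `a`-subset of `[t]`
is disjoint from some member of the family. -/
theorem stmt4 (t a b : ℕ) (ha : 1 ≤ a) (hb : 1 ≤ b) (hab : a + b ≤ t) :
    ∃ R : Fin (⌈((t.choose a : ℝ) / ((t - b).choose a : ℝ)) *
              Real.log (t.choose a)⌉₊) → Finset (Fin t),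
      (∀ i, (R i).card = b) ∧
      ∀ S : Finset (Fin t), S.card = a → ∃ i, Disjoint (R i) S := by
  have hN : (1 : ℝ) < t.choose a := by
    have := Nat.choose_le_choose a (show a + 1 ≤ t by omega)
    rw [Nat.choose_succ_self_right] at this
    exact_mod_cast (show 1 < t.choose a by omega)
  have hr0 : (0 : ℝ) < (t - b).choose a / t.choose a :=
    div_pos (by exact_mod_cast Nat.choose_pos (by omega)) (by linarith)
  have hr1 : ((t - b).choose a / t.choose a : ℝ) ≤ 1 :=
    div_le_one_of_le₀ (by exact_mod_cast Nat.choose_le_choose a (Nat.sub_le t b)) (by linarith)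
  have hstep (𝒮 : Finset (Finset (Fin t))) (h𝒮 : 𝒮 ⊆ powersetCard a univ) :
      ∃ B : Finset (Fin t), #B = b ∧
        ((t - b).choose a / t.choose a : ℝ) * #𝒮 ≤ #{S ∈ 𝒮 | Disjoint B S} := by
    simpa only [Fintype.card_fin] using exists_card_eq_choose_div_mul_le_card_filter_disjoint
      (by simpa using hab) 𝒮 fun S hS => mem_powersetCard_univ.1 (h𝒮 hS)
  obtain ⟨R, hRcard, hR⟩ :=
    exists_card_uncovered_le_mul_one_sub_pow (fun B => #B = b) Disjoint hr1 _ hstep _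
  have huncovered : #{S ∈ powersetCard a univ | ∀ i, ¬ Disjoint (R i) S} = 0 := by
    rw [← Nat.lt_one_iff, ← Nat.cast_lt (α := ℝ), Nat.cast_one]
    refine hR.trans_lt ?_
    rw [card_powersetCard, card_univ, Fintype.card_fin]
    exact Real.mul_one_sub_pow_lt_one hN hr0 hr1 (by rw [inv_div]; exact Nat.le_ceil _)
  refine ⟨R, hRcard, fun S hS => ?_⟩
  simpa using filter_eq_empty_iff.1 (card_eq_zero.1 huncovered) (mem_powersetCard_univ.2 hS)
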